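/- There exists an uncountable family of W-subshifts X ⊆ {0,1}^ℤ none of which is sofic and none of which is strongly irreducible. Concretely, for σ ∈ {2,4}^ℕ set S(σ) = {1 + σ(0) + ⋯ + σ(n−1) : n ∈ ℕ} and let X_σ ⊆ {0,1}^ℤ consist of all x such that no word of the form 01^m0 with m ∈ ℕ \ S(σ) appears in x. Then the map σ ↦ X_σ is injective, each X_σ is a W-subshift (with n₀ = 3), each X_σ is not topologically mixing (hence not strongly irreducible), and only countably many of the X_σ are sofic. -/

import Mathlib

/-!
Every element of `S(σ)` is odd, so two zeros of a configuration of `X_σ` are always an even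
distance apart; hence the two `2`-periodic configurations with zeros at the even, resp. odd,
positions can never be glued, and `X_σ` is not mixing. Consecutive elements of `S(σ)` differ
by at most `4`, so between any two words of the language one can insert at most three `1`s to
make the one newly created block `01^m0` admissible. The configuration with exactly two zeros,
`m + 1` apart, lies in `X_σ` iff `m ∈ S(σ)`, so `X_σ` determines `σ`. Finally, by the
Curtis–Hedlund–Lyndon theorem a sofic subshift is described by countably many data (an SFT
over some `Fin k` and a block map), so only countably many of the uncountably many `X_σ` are
sofic.
-/

/-- The shift action of `ℤ` on configurations `x : ℤ → A`: `(n • x)(m) = x(m - n)`. -/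
def shiftZ {A : Type*} (n : ℤ) (x : ℤ → A) : ℤ → A :=
  fun m => x (m - n)

/-- A subshift is a closed, shift-invariant subset of `A^ℤ` (with the prodiscrete
topology). -/
def IsSubshiftZ {A : Type*} [TopologicalSpace A] (X : Set (ℤ → A)) : Prop :=
  IsClosed X ∧ ∀ (n : ℤ) (x : ℤ → A), x ∈ X → shiftZ n x ∈ X

/-- A configuration is periodic if its orbit under the shift action is finite. -/
def IsPeriodicZ {A : Type*} (x : ℤ → A) : Prop :=
  (Set.range fun n : ℤ => shiftZ n x).Finite

/-- A subshift `X ⊆ A^ℤ` is strongly irreducible if there is a finite `Δ ⊆ ℤ` such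
that whenever `Ω₁, Ω₂` are finite subsets of `ℤ` with `(Ω₁ - Δ) ∩ Ω₂ = ∅`, any two
configurations of `X` can be glued along `Ω₁` and `Ω₂` inside `X`. -/
def IsStronglyIrreducibleZ {A : Type*} (X : Set (ℤ → A)) : Prop :=
  ∃ Δ : Finset ℤ, ∀ Ω₁ Ω₂ : Finset ℤ,
    (∀ a ∈ Ω₁, ∀ d ∈ Δ, a - d ∉ Ω₂) →
    ∀ x₁ ∈ X, ∀ x₂ ∈ X, ∃ x ∈ X,
      (∀ i ∈ Ω₁, x i = x₁ i) ∧ (∀ i ∈ Ω₂, x i = x₂ i)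

/-- The word `w` appears as a subword of the configuration `x : ℤ → A`. -/
def AppearsIn {A : Type*} (w : List A) (x : ℤ → A) : Prop :=
  ∃ i : ℤ, ∀ k : Fin w.length, x (i + (k.1 : ℤ)) = w.get k

/-- The language of `X ⊆ A^ℤ`: all finite words appearing in configurations of `X`. -/
def lang {A : Type*} (X : Set (ℤ → A)) : Set (List A) :=
  {w : List A | ∃ x ∈ X, AppearsIn w x}

/-- `X ⊆ A^ℤ` is irreducible if any two words of its language can be joined,
within the language, by some word. -/
def IrreducibleZ {A : Type*} (X : Set (ℤ → A)) : Prop :=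
  ∀ u ∈ lang X, ∀ v ∈ lang X, ∃ w : List A, u ++ w ++ v ∈ lang X

/-- `X ⊆ A^ℤ` is a W-subshift if there is `n₀ ≥ 0` such that any two words of its
language can be joined, within the language, by a word of length at most `n₀`. -/
def IsWSubshift {A : Type*} (X : Set (ℤ → A)) : Prop :=
  ∃ n₀ : ℕ, ∀ u ∈ lang X, ∀ v ∈ lang X,
    ∃ c ∈ lang X, c.length ≤ n₀ ∧ u ++ c ++ v ∈ lang X

/-- A subshift of `A^ℤ` is of finite type if it is defined by a finite window `Ω` and
a set of allowed patterns `P ⊆ A^Ω`. -/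
def IsOfFiniteTypeZ {A : Type*} (X : Set (ℤ → A)) : Prop :=
  ∃ (Ω : Finset ℤ) (P : Set ({i : ℤ // i ∈ Ω} → A)),
    X = {x : ℤ → A | ∀ n : ℤ, (fun w : {i : ℤ // i ∈ Ω} => shiftZ n x w.1) ∈ P}

/-- A subshift `X ⊆ A^ℤ` is sofic if it is the image of a subshift of finite type
`Y ⊆ B^ℤ` (over a finite alphabet `B`, with its prodiscrete topology) under a
surjective continuous shift-equivariant map. -/
def IsSoficZ {A : Type*} [TopologicalSpace A] (X : Set (ℤ → A)) : Prop :=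
  ∃ (B : Type) (_ : Finite B) (Y : Set (ℤ → B)) (f : (ℤ → B) → (ℤ → A)),
    letI : TopologicalSpace B := ⊥
    IsSubshiftZ Y ∧ IsOfFiniteTypeZ Y ∧
      ContinuousOn f Y ∧ (∀ (n : ℤ), ∀ y ∈ Y, f (shiftZ n y) = shiftZ n (f y)) ∧
      f '' Y = X

/-- The periodic configuration `w^∞ ∈ A^ℤ` obtained by repeating a nonempty word `w`
bi-infinitely. -/
def perConfig {A : Type*} (w : List A) (hw : w ≠ []) : ℤ → A := fun i =>
  w.get ⟨(i % (w.length : ℤ)).toNat, by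
    have h0 : 0 < w.length := by
      cases w with
      | nil => exact absurd rfl hw
      | cons a t => exact Nat.succ_pos _
    have h1 : 0 ≤ i % (w.length : ℤ) :=
      Int.emod_nonneg _ (by exact_mod_cast h0.ne')
    have h2 : i % (w.length : ℤ) < (w.length : ℤ) :=
      Int.emod_lt_of_pos _ (by exact_mod_cast h0)
    omega⟩

/-- A subshift `X ⊆ A^ℤ` is topologically mixing if for every finite `Ω ⊆ ℤ` and
configurations `x₁, x₂ ∈ X` there is a finite `F ⊆ ℤ` such that for all `n ∉ F` some
configuration of `X` agrees with `x₁` on `Ω` and with `x₂` on `n + Ω`. -/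
def TopologicallyMixingZ {A : Type*} (X : Set (ℤ → A)) : Prop :=
  ∀ (Ω : Finset ℤ), ∀ x₁ ∈ X, ∀ x₂ ∈ X, ∃ F : Finset ℤ, ∀ n : ℤ, n ∉ F →
    ∃ x ∈ X, (∀ i ∈ Ω, x i = x₁ i) ∧ (∀ i ∈ Ω, x (n + i) = x₂ (n + i))

/-- `S(σ) = {1 + σ(0) + ⋯ + σ(n−1) : n ∈ ℕ}`. -/
def Ssig (σ : ℕ → ℕ) : Set ℕ :=
  {m : ℕ | ∃ n : ℕ, m = 1 + ∑ k ∈ Finset.range n, σ k}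

/-- The word `01^m0` appears in the configuration `x : ℤ → Bool`
(`false` stands for `0` and `true` for `1`). -/
def HasBlock (m : ℕ) (x : ℤ → Bool) : Prop :=
  ∃ i : ℤ, x i = false ∧ x (i + (m : ℤ) + 1) = false ∧
    ∀ j : ℤ, 0 < j → j ≤ (m : ℤ) → x (i + j) = true

/-- The subshift `X_σ ⊆ {0,1}^ℤ` of all configurations in which no word `01^m0` with
`m ∉ S(σ)` appears. -/
def Xsig (σ : ℕ → ℕ) : Set (ℤ → Bool) :=
  {x : ℤ → Bool | ∀ m : ℕ, m ∉ Ssig σ → ¬ HasBlock m x}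

open Finset Topology

def ssigElem (σ : ℕ → ℕ) (n : ℕ) : ℕ := 1 + ∑ k ∈ range n, σ k

theorem Ssig_eq_range (σ : ℕ → ℕ) : Ssig σ = Set.range (ssigElem σ) := by
  ext m
  exact ⟨fun ⟨n, hn⟩ => ⟨n, hn.symm⟩, fun ⟨n, hn⟩ => ⟨n, hn.symm⟩⟩

theorem ssigElem_zero (σ : ℕ → ℕ) : ssigElem σ 0 = 1 := by
  simp [ssigElem]

theorem ssigElem_succ (σ : ℕ → ℕ) (n : ℕ) : ssigElem σ (n + 1) = ssigElem σ n + σ n := by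
  simp only [ssigElem, sum_range_succ, add_assoc]

theorem one_mem_Ssig (σ : ℕ → ℕ) : 1 ∈ Ssig σ :=
  Ssig_eq_range σ ▸ ⟨0, ssigElem_zero σ⟩

theorem ssigElem_strictMono {σ : ℕ → ℕ} (hσ : ∀ n, 0 < σ n) : StrictMono (ssigElem σ) :=
  strictMono_nat_of_lt_succ fun n => by rw [ssigElem_succ]; exact Nat.lt_add_of_pos_right (hσ n)

theorem eq_of_Ssig_eq {σ σ' : ℕ → ℕ} (hσ : ∀ n, 0 < σ n) (hσ' : ∀ n, 0 < σ' n)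
    (h : Ssig σ = Ssig σ') : σ = σ' := by
  rw [Ssig_eq_range, Ssig_eq_range,
    (ssigElem_strictMono hσ).range_inj (ssigElem_strictMono hσ')] at h
  funext n
  have := congrFun h (n + 1)
  rw [ssigElem_succ, ssigElem_succ, h] at this
  omega

theorem odd_of_mem_Ssig {σ : ℕ → ℕ} (hσ : ∀ n, Even (σ n)) {m : ℕ} (hm : m ∈ Ssig σ) :
    Odd m := by
  obtain ⟨n, rfl⟩ := hm
  exact (Finset.even_sum _ fun k _ => hσ k).one_add

theorem exists_add_mem_Ssig {σ : ℕ → ℕ} (hpos : ∀ n, 0 < σ n) (hle : ∀ n, σ n ≤ 4) (N : ℕ) :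
    ∃ j ≤ 3, N + j ∈ Ssig σ := by
  have hex : ∃ n, N ≤ ssigElem σ n := ⟨N, (ssigElem_strictMono hpos).id_le N⟩
  rw [Ssig_eq_range]
  obtain ⟨k, hN, hmin⟩ : ∃ k, N ≤ ssigElem σ k ∧ ∀ n < k, ¬ N ≤ ssigElem σ n :=
    ⟨_, Nat.find_spec hex, fun _ => Nat.find_min hex⟩
  rcases k with _ | n
  · rw [ssigElem_zero] at hN
    exact ⟨1 - N, by omega, 0, by rw [ssigElem_zero]; omega⟩
  · have hlt := hmin n (Nat.lt_succ_self n)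
    rw [ssigElem_succ] at hN
    have := hle n
    exact ⟨ssigElem σ n + σ n - N, by omega, n + 1, by rw [ssigElem_succ]; omega⟩

theorem mem_nhds_pi_discrete_iff {ι B : Type*} [TopologicalSpace B] [DiscreteTopology B]
    {y : ι → B} {U : Set (ι → B)} :
    U ∈ 𝓝 y ↔ ∃ I : Finset ι, {z | ∀ i ∈ I, z i = y i} ⊆ U := by
  simp only [nhds_pi, Filter.mem_pi, nhds_discrete, Filter.mem_pure]
  constructor
  · rintro ⟨I, hI, t, ht, hsub⟩
    exact ⟨hI.toFinset, fun z hz => hsub fun i hi => (hz i (hI.mem_toFinset.2 hi)).symm ▸ ht i⟩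
  · rintro ⟨I, hsub⟩
    exact ⟨I, I.finite_toSet, fun i => {y i}, fun i => rfl, fun z hz => hsub fun i hi => hz i hi⟩

def IsBlockAt (m : ℕ) (x : ℤ → Bool) (i : ℤ) : Prop :=
  x i = false ∧ x (i + m + 1) = false ∧ ∀ j : ℤ, 0 < j → j ≤ m → x (i + j) = true

theorem hasBlock_of_isBlockAt_of_eq {m : ℕ} {x y : ℤ → Bool} {i p : ℤ} (hx : IsBlockAt m x i)
    (hxy : ∀ k : ℤ, 0 ≤ k → k ≤ m + 1 → y (p + k) = x (i + k)) : HasBlock m y := by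
  obtain ⟨h0, h1, hmid⟩ := hx
  refine ⟨p, ?_, ?_, fun j hj hjm => ?_⟩
  · simpa [h0] using hxy 0 le_rfl (by omega)
  · rw [add_assoc, hxy _ (by omega) le_rfl, ← add_assoc, h1]
  · rw [hxy j hj.le (by omega), hmid j hj hjm]

theorem hasBlock_shiftZ_iff {m : ℕ} {x : ℤ → Bool} (n : ℤ) :
    HasBlock m (shiftZ n x) ↔ HasBlock m x := by
  constructor
  · rintro ⟨i, hi⟩
    exact hasBlock_of_isBlockAt_of_eq (p := i - n) hi fun k _ _ => by simp only [shiftZ]; ring_nf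
  · rintro ⟨i, hi⟩
    exact hasBlock_of_isBlockAt_of_eq (p := i + n) hi fun k _ _ => by simp only [shiftZ]; ring_nf

theorem isClosed_Xsig (σ : ℕ → ℕ) : IsClosed (Xsig σ) := by
  refine isOpen_compl_iff.1 (isOpen_iff_mem_nhds.2 fun x hx => ?_)
  simp only [Set.mem_compl_iff, Xsig, Set.mem_ofPred_eq, not_forall, not_not] at hx
  obtain ⟨m, hm, i, hi⟩ := hx
  refine mem_nhds_pi_discrete_iff.2 ⟨Finset.Icc i (i + m + 1), fun z hz hzX => hzX m hm ?_⟩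
  exact hasBlock_of_isBlockAt_of_eq hi fun k hk hkm => hz _ (Finset.mem_Icc.2 ⟨by omega, by omega⟩)

theorem isSubshiftZ_Xsig (σ : ℕ → ℕ) : IsSubshiftZ (Xsig σ) :=
  ⟨isClosed_Xsig σ, fun n _ hx m hm hB => hx m hm ((hasBlock_shiftZ_iff n).1 hB)⟩

def blockConfig (m : ℕ) : ℤ → Bool := fun i => decide (i ≠ 0 ∧ i ≠ m + 1)

theorem hasBlock_blockConfig_iff {m m' : ℕ} : HasBlock m' (blockConfig m) ↔ m' = m := by
  constructor
  · rintro ⟨i, h0, h1, -⟩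
    simp only [blockConfig, decide_eq_false_iff_not, not_and_or, not_not] at h0 h1
    omega
  · rintro rfl
    refine ⟨0, by simp [blockConfig], by simp [blockConfig], fun j hj hjm => ?_⟩
    simp only [blockConfig, decide_eq_true_eq]
    omega

theorem blockConfig_mem_Xsig_iff {σ : ℕ → ℕ} {m : ℕ} : blockConfig m ∈ Xsig σ ↔ m ∈ Ssig σ := by
  simp only [Xsig, Set.mem_ofPred_eq, hasBlock_blockConfig_iff]
  exact ⟨fun h => by_contra fun hm => h m hm rfl, fun h m' hm' hm'm => hm' (hm'm ▸ h)⟩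

theorem Xsig_injOn : Set.InjOn Xsig {σ | ∀ n, 0 < σ n} := fun σ hσ σ' hσ' h =>
  eq_of_Ssig_eq hσ hσ' <| Set.ext fun m => by
    rw [← blockConfig_mem_Xsig_iff, h, blockConfig_mem_Xsig_iff]

def padTrue (w : List Bool) : ℤ → Bool := fun i => if 0 ≤ i then w.getD i.toNat true else true

theorem padTrue_natCast (w : List Bool) (n : ℕ) : padTrue w n = w.getD n true := by
  simp [padTrue]

theorem padTrue_of_neg (w : List Bool) {i : ℤ} (hi : i < 0) : padTrue w i = true := by
  simp [padTrue, hi.not_ge]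

theorem padTrue_eq_false {w : List Bool} {i : ℤ} (h : padTrue w i = false) :
    0 ≤ i ∧ i < w.length := by
  by_cases hi : 0 ≤ i
  · lift i to ℕ using hi
    rw [padTrue_natCast] at h
    by_contra hlen
    rw [List.getD_eq_default _ _ (by omega)] at h
    exact Bool.noConfusion h
  · rw [padTrue_of_neg w (by omega)] at h
    exact Bool.noConfusion h

theorem appearsIn_padTrue (w : List Bool) : AppearsIn w (padTrue w) :=
  ⟨0, fun k => by rw [zero_add, padTrue_natCast, List.getD_eq_getElem _ _ k.2]; rfl⟩

theorem padTrue_replicate_true (j : ℕ) : padTrue (List.replicate j true) = fun _ => true := by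
  funext i
  rcases lt_or_ge i 0 with hi | hi
  · exact padTrue_of_neg _ hi
  · lift i to ℕ using hi
    rw [padTrue_natCast, List.getD_eq_getElem?_getD, List.getElem?_getD_replicate_default_eq]

theorem padTrue_append_replicate_append (u v : List Bool) (j : ℕ) :
    padTrue (u ++ List.replicate j true ++ v) =
      fun k => padTrue u k && shiftZ (u.length + j) (padTrue v) k := by
  funext k
  simp only [shiftZ]
  rcases lt_or_ge k 0 with hk | hk
  · rw [padTrue_of_neg _ hk, padTrue_of_neg _ hk, padTrue_of_neg _ (by omega), Bool.and_true]
  lift k to ℕ using hk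
  rcases lt_or_ge k u.length with h1 | h1
  · rw [padTrue_natCast, padTrue_natCast, List.getD_append _ _ _ _ (by simp; omega),
      List.getD_append _ _ _ _ h1, padTrue_of_neg _ (by omega), Bool.and_true]
  rw [padTrue_natCast, padTrue_natCast, List.getD_eq_default u _ h1, Bool.true_and]
  rcases lt_or_ge k (u.length + j) with h2 | h2
  · rw [List.getD_append _ _ _ _ (by simp; omega), List.getD_append_right _ _ _ _ h1,
      List.getD_replicate true (by omega), padTrue_of_neg _ (by omega)]
  · rw [List.getD_append_right _ _ _ _ (by simp; omega), List.length_append,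
      List.length_replicate,
      show (k : ℤ) - (u.length + j) = ((k - (u.length + j) : ℕ) : ℤ) by omega, padTrue_natCast]

theorem mem_lang_Xsig_iff {σ : ℕ → ℕ} {w : List Bool} :
    w ∈ lang (Xsig σ) ↔ padTrue w ∈ Xsig σ := by
  refine ⟨?_, fun hw => ⟨_, hw, appearsIn_padTrue w⟩⟩
  rintro ⟨x, hx, p, hp⟩ m hm ⟨i, hi⟩
  have hi0 := (padTrue_eq_false hi.1).1
  have hilen := (padTrue_eq_false hi.2.1).2
  refine hx m hm (hasBlock_of_isBlockAt_of_eq (p := p + i) hi fun k hk hkm => ?_)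
  lift i + k to ℕ using (by omega) with n hn
  rw [add_assoc, ← hn, hp ⟨n, by omega⟩, padTrue_natCast, List.getD_eq_getElem _ _ (by omega)]
  rfl

/-- A block of `x && y` lies in `x`, lies in `y`, or runs from the last zero of `x` to the
first zero of `y`. -/
theorem and_mem_Xsig {σ : ℕ → ℕ} {x y : ℤ → Bool} (hx : x ∈ Xsig σ) (hy : y ∈ Xsig σ)
    (hlt : ∀ a b, x a = false → y b = false → a < b)
    (hcross : ∀ a b, x a = false → (∀ k, a < k → x k = true) →
      y b = false → (∀ k, k < b → y k = true) → (b - a - 1).toNat ∈ Ssig σ) :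
    (fun k => x k && y k) ∈ Xsig σ := by
  rintro m hm ⟨i, h0, h1, hmid⟩
  simp only [Bool.and_eq_false_iff] at h0 h1
  simp only [Bool.and_eq_true] at hmid
  rcases h0 with h0 | h0 <;> rcases h1 with h1 | h1
  · exact hx m hm ⟨i, h0, h1, fun j hj hjm => (hmid j hj hjm).1⟩
  · refine hm ?_
    convert hcross i (i + m + 1) h0 (fun k hk => ?_) h1 (fun k hk => ?_) using 1
    · omega
    · by_contra hxk
      have := hlt k _ (Bool.eq_false_iff.2 hxk) h1
      exact hxk (by simpa using (hmid (k - i) (by omega) (by omega)).1)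
    · by_contra hyk
      have := hlt i k h0 (Bool.eq_false_iff.2 hyk)
      exact hyk (by simpa using (hmid (k - i) (by omega) (by omega)).2)
  · exact absurd (hlt _ _ h1 h0) (by omega)
  · exact hy m hm ⟨i, h0, h1, fun j hj hjm => (hmid j hj hjm).2⟩

theorem subsingleton_setOf_isLastZero (x : ℤ → Bool) :
    {a | x a = false ∧ ∀ k, a < k → x k = true}.Subsingleton := by
  rintro a ⟨ha, ha'⟩ b ⟨hb, hb'⟩
  by_contra hab
  rcases lt_or_gt_of_ne hab with h | h
  · simp [ha' b h] at hb
  · simp [hb' a h] at ha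

theorem subsingleton_setOf_isFirstZero (y : ℤ → Bool) :
    {b | y b = false ∧ ∀ k, k < b → y k = true}.Subsingleton := by
  rintro a ⟨ha, ha'⟩ b ⟨hb, hb'⟩
  by_contra hab
  rcases lt_or_gt_of_ne hab with h | h
  · simp [hb' a h] at ha
  · simp [ha' b h] at hb

/-- The run of `j` ones is chosen so that the one new block, from the last zero of `x` to the
first zero of `y`, has length in `S(σ)`. -/
theorem exists_and_shiftZ_mem_Xsig {σ : ℕ → ℕ} (hpos : ∀ n, 0 < σ n) (hle : ∀ n, σ n ≤ 4)
    {x y : ℤ → Bool} (hx : x ∈ Xsig σ) (hy : y ∈ Xsig σ) {L : ℤ}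
    (hxL : ∀ k, x k = false → k < L) (hy0 : ∀ k, y k = false → 0 ≤ k) :
    ∃ j : ℕ, j ≤ 3 ∧ (fun k => x k && shiftZ (L + j) y k) ∈ Xsig σ := by
  set P := {a | x a = false ∧ ∀ k, a < k → x k = true}
  set Q := {b | y b = false ∧ ∀ k, k < b → y k = true}
  have glue : ∀ j : ℕ, (∀ a ∈ P, ∀ b ∈ Q, (L + j + b - a - 1).toNat ∈ Ssig σ) →
      (fun k => x k && shiftZ (L + j) y k) ∈ Xsig σ := by
    intro j hj
    refine and_mem_Xsig hx ((isSubshiftZ_Xsig σ).2 _ _ hy) (fun a b ha hb => ?_)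
      (fun a b ha ha' hb hb' => ?_)
    · have := hxL a ha
      have := hy0 _ hb
      omega
    · convert hj a ⟨ha, ha'⟩ (b - (L + j)) ⟨hb, fun k hk => ?_⟩ using 2
      · ring
      · simpa [shiftZ] using hb' (k + (L + j)) (by omega)
  by_cases hPQ : P.Nonempty ∧ Q.Nonempty
  · obtain ⟨⟨a₀, ha₀⟩, b₀, hb₀⟩ := hPQ
    have := hxL a₀ ha₀.1
    have := hy0 b₀ hb₀.1
    obtain ⟨j, hj, hS⟩ := exists_add_mem_Ssig hpos hle (L + b₀ - a₀ - 1).toNat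
    refine ⟨j, hj, glue j fun a ha b hb => ?_⟩
    rw [subsingleton_setOf_isLastZero x ha ha₀, subsingleton_setOf_isFirstZero y hb hb₀]
    convert hS using 2
    omega
  · exact ⟨0, by norm_num, glue 0 fun a ha b hb => absurd ⟨⟨a, ha⟩, b, hb⟩ hPQ⟩

theorem exists_append_mem_lang_Xsig {σ : ℕ → ℕ} (hpos : ∀ n, 0 < σ n) (hle : ∀ n, σ n ≤ 4) :
    ∀ u ∈ lang (Xsig σ), ∀ v ∈ lang (Xsig σ),
      ∃ c ∈ lang (Xsig σ), c.length ≤ 3 ∧ u ++ c ++ v ∈ lang (Xsig σ) := by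
  intro u hu v hv
  rw [mem_lang_Xsig_iff] at hu hv
  obtain ⟨j, hj, hglue⟩ := exists_and_shiftZ_mem_Xsig hpos hle hu hv
    (fun k hk => (padTrue_eq_false hk).2) (fun k hk => (padTrue_eq_false hk).1)
  refine ⟨List.replicate j true, ?_, by simpa using hj, ?_⟩
  · rw [mem_lang_Xsig_iff, padTrue_replicate_true]
    rintro m - ⟨i, h0, -⟩
    exact Bool.noConfusion h0
  · rwa [mem_lang_Xsig_iff, padTrue_append_replicate_append]

theorem IsStronglyIrreducibleZ.topologicallyMixingZ {A : Type*} {X : Set (ℤ → A)}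
    (hX : IsStronglyIrreducibleZ X) : TopologicallyMixingZ X := by
  classical
  obtain ⟨Δ, hΔ⟩ := hX
  intro Ω x₁ hx₁ x₂ hx₂
  refine ⟨((Ω ×ˢ Δ) ×ˢ Ω).image fun p => p.1.1 - p.1.2 - p.2, fun n hn => ?_⟩
  have hsep : ∀ a ∈ Ω, ∀ d ∈ Δ, a - d ∉ Ω.image (n + ·) := by
    intro a ha d hd had
    obtain ⟨b, hb, hab⟩ := Finset.mem_image.1 had
    exact hn (Finset.mem_image.2 ⟨((a, d), b), by simp [ha, hd, hb], by simp only; omega⟩)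
  obtain ⟨x, hx, h₁, h₂⟩ := hΔ Ω (Ω.image (n + ·)) hsep x₁ hx₁ x₂ hx₂
  exact ⟨x, hx, h₁, fun i hi => h₂ _ (Finset.mem_image_of_mem _ hi)⟩

theorem even_of_eq_false_of_eq_false {σ : ℕ → ℕ} (hσ : ∀ n, Even (σ n)) {x : ℤ → Bool}
    (hx : x ∈ Xsig σ) (d : ℕ) : ∀ i, x i = false → x (i + d) = false → Even d := by
  induction d using Nat.strong_induction_on with
  | _ d ih =>
  intro i hi hd
  by_cases hmid : ∃ k : ℕ, 0 < k ∧ k < d ∧ x (i + k) = false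
  · obtain ⟨k, hk0, hkd, hk⟩ := hmid
    obtain ⟨e, rfl⟩ := Nat.exists_eq_add_of_le hkd.le
    push_cast at hd
    exact (ih k hkd i hi hk).add (ih e (by omega) _ hk (by rwa [add_assoc]))
  · push Not at hmid
    rcases Nat.eq_zero_or_pos d with rfl | hd0
    · exact ⟨0, rfl⟩
    have hblock : HasBlock (d - 1) x := by
      refine ⟨i, hi, by rwa [show i + ((d - 1 : ℕ) : ℤ) + 1 = i + d by omega], fun j hj hjd => ?_⟩
      lift j to ℕ using hj.le
      simpa using hmid j (by exact_mod_cast hj) (by omega)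
    have := odd_of_mem_Ssig hσ (by_contra fun h => hx _ h hblock)
    rw [← Nat.sub_add_cancel hd0]
    exact this.add_one

theorem even_sub_of_eq_false {σ : ℕ → ℕ} (hσ : ∀ n, Even (σ n)) {x : ℤ → Bool}
    (hx : x ∈ Xsig σ) {i j : ℤ} (hi : x i = false) (hj : x j = false) : Even (j - i) := by
  wlog hij : i ≤ j generalizing i j
  · rw [← neg_sub, even_neg]
    exact this hj hi (by omega)
  obtain ⟨d, rfl⟩ := Int.le.dest hij
  simpa using (even_of_eq_false_of_eq_false hσ hx d i hi hj).natCast (α := ℤ)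

def altConfig (r : ℤ) : ℤ → Bool := fun i => decide ((i + r) % 2 = 1)

theorem altConfig_mem_Xsig (σ : ℕ → ℕ) (r : ℤ) : altConfig r ∈ Xsig σ := by
  rintro m hm ⟨i, h0, h1, hmid⟩
  simp only [altConfig, decide_eq_false_iff_not] at h0 h1
  rcases (show m = 0 ∨ m = 1 ∨ 2 ≤ m by omega) with rfl | rfl | h2
  · omega
  · exact hm (one_mem_Ssig σ)
  · have := hmid 2 (by norm_num) (by omega)
    simp only [altConfig, decide_eq_true_eq] at this
    omega

theorem not_topologicallyMixingZ_Xsig {σ : ℕ → ℕ} (hσ : ∀ n, Even (σ n)) :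
    ¬ TopologicallyMixingZ (Xsig σ) := by
  intro h
  obtain ⟨F, hF⟩ := h {0, 1} _ (altConfig_mem_Xsig σ 0) _ (altConfig_mem_Xsig σ 1)
  obtain ⟨n, hn⟩ := Infinite.exists_notMem_finset F
  obtain ⟨x, hx, h₁, h₂⟩ := hF n hn
  have h0 : x 0 = false := by simpa [altConfig] using h₁ 0 (by simp)
  obtain ⟨k, hk, hodd⟩ : ∃ k ∈ ({0, 1} : Finset ℤ), (n + k) % 2 = 1 := by
    rcases Int.emod_two_eq_zero_or_one n with h | h
    exacts [⟨1, by simp, by omega⟩, ⟨0, by simp, by omega⟩]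
  have hxk : x (n + k) = false := by
    rw [h₂ k hk]
    simp only [altConfig, decide_eq_false_iff_not]
    omega
  have := even_sub_of_eq_false hσ hx h0 hxk
  rw [Int.even_iff] at this
  omega

section Sofic

variable {A B : Type*}

def sftZ (Ω : Finset ℤ) (P : Set (Ω → B)) : Set (ℤ → B) :=
  {x | ∀ n : ℤ, (fun w : Ω => shiftZ n x w.1) ∈ P}

def slidingBlockCode (W : Finset ℤ) (μ : (W → B) → A) (y : ℤ → B) : ℤ → A :=
  fun n => μ fun w => y (w.1 + n)

theorem exists_finset_forall_eq_of_continuousOn {ι : Type*} [TopologicalSpace B]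
    [DiscreteTopology B] [TopologicalSpace A] [DiscreteTopology A] {Y : Set (ι → B)}
    (hY : IsCompact Y) {g : (ι → B) → A} (hg : ContinuousOn g Y) :
    ∃ W : Finset ι, ∀ y ∈ Y, ∀ y' ∈ Y, (∀ i ∈ W, y i = y' i) → g y = g y' := by
  classical
  have hloc : ∀ y ∈ Y, ∃ I : Finset ι, ∀ z ∈ Y, (∀ i ∈ I, z i = y i) → g z = g y := by
    intro y hy
    obtain ⟨U, hU, hUY⟩ := mem_nhdsWithin_iff_exists_mem_nhds_inter.1
      (hg y hy ((isOpen_discrete {g y}).mem_nhds rfl))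
    obtain ⟨I, hI⟩ := mem_nhds_pi_discrete_iff.1 hU
    exact ⟨I, fun z hz hzy => hUY ⟨hI hzy, hz⟩⟩
  choose! I hI using hloc
  obtain ⟨t, htY, hcover⟩ := hY.elim_nhds_subcover (fun y => {z | ∀ i ∈ I y, z i = y i})
    fun y _ => mem_nhds_pi_discrete_iff.2 ⟨I y, subset_rfl⟩
  refine ⟨t.biUnion I, fun y hy y' hy' hyy' => ?_⟩
  obtain ⟨p, hp, hyp⟩ := Set.mem_iUnion₂.1 (hcover hy)
  have hy'p : ∀ i ∈ I p, y' i = p i := fun i hi =>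
    (hyy' i (Finset.mem_biUnion.2 ⟨p, hp, hi⟩)).symm.trans (hyp i hi)
  rw [hI p (htY p hp) y hy hyp, hI p (htY p hp) y' hy' hy'p]

/-- Curtis–Hedlund–Lyndon, on a compact shift-invariant set. -/
theorem exists_eqOn_slidingBlockCode [TopologicalSpace B] [DiscreteTopology B]
    [TopologicalSpace A] [DiscreteTopology A] [Nonempty A] {Y : Set (ℤ → B)} (hY : IsCompact Y)
    (hshift : ∀ n, ∀ y ∈ Y, shiftZ n y ∈ Y) {f : (ℤ → B) → (ℤ → A)} (hf : ContinuousOn f Y)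
    (hequiv : ∀ n, ∀ y ∈ Y, f (shiftZ n y) = shiftZ n (f y)) :
    ∃ (W : Finset ℤ) (μ : (W → B) → A), Set.EqOn f (slidingBlockCode W μ) Y := by
  classical
  obtain ⟨W, hW⟩ :=
    exists_finset_forall_eq_of_continuousOn hY ((continuous_apply 0).comp_continuousOn hf)
  let μ : (W → B) → A := fun q =>
    if h : ∃ y ∈ Y, ∀ w : W, y w = q w then f h.choose 0 else Classical.arbitrary A
  refine ⟨W, μ, fun y hy => funext fun n => ?_⟩
  have hq : ∃ y' ∈ Y, ∀ w : W, y' w = y (w.1 + n) :=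
    ⟨shiftZ (-n) y, hshift _ _ hy, fun w => by simp [shiftZ]⟩
  have hfn : f y n = f (shiftZ (-n) y) 0 := by simp [hequiv _ _ hy, shiftZ]
  simp only [slidingBlockCode, μ, dif_pos hq, hfn]
  exact hW _ (hshift _ _ hy) _ hq.choose_spec.1 fun i hi => by
    simpa [shiftZ] using (hq.choose_spec.2 ⟨i, hi⟩).symm

theorem IsSoficZ.exists_eq_image_slidingBlockCode [TopologicalSpace A] [DiscreteTopology A]
    [Nonempty A] {X : Set (ℤ → A)} (hX : IsSoficZ X) :
    ∃ (k : ℕ) (Ω : Finset ℤ) (P : Set (Ω → Fin k)) (W : Finset ℤ) (μ : (W → Fin k) → A),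
      X = slidingBlockCode W μ '' sftZ Ω P := by
  obtain ⟨B, hB, Y, f, hYsub, ⟨Ω, P, rfl⟩, hf, hequiv, rfl⟩ := hX
  let _ : TopologicalSpace B := ⊥
  have : DiscreteTopology B := ⟨rfl⟩
  obtain ⟨W, μ, hfμ⟩ := exists_eqOn_slidingBlockCode hYsub.1.isCompact hYsub.2 hf hequiv
  let e := Finite.equivFin B
  refine ⟨Nat.card B, Ω, (fun p => e.symm ∘ p) ⁻¹' P, W, fun q => μ (e.symm ∘ q), ?_⟩
  have hrecode : sftZ Ω ((fun p => e.symm ∘ p) ⁻¹' P) = (fun y => e ∘ y) '' sftZ Ω P :=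
    (congrFun (Set.image_eq_preimage_of_inverse (f := fun y : ℤ → B => e ∘ y)
      (g := fun y => e.symm ∘ y) (fun y => by funext; simp) (fun y => by funext; simp))
      (sftZ Ω P)).symm
  rw [hfμ.image_eq, hrecode, Set.image_image]
  exact Set.image_congr fun y _ => by funext n; simp [slidingBlockCode, Function.comp_def]

theorem countable_setOf_isSoficZ [TopologicalSpace A] [DiscreteTopology A] [Finite A]
    [Nonempty A] : {X : Set (ℤ → A) | IsSoficZ X}.Countable := by
  refine (Set.countable_iUnion fun k : ℕ => Set.countable_iUnion fun Ω : Finset ℤ =>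
    Set.countable_iUnion fun P : Set (Ω → Fin k) => Set.countable_iUnion fun W : Finset ℤ =>
    Set.countable_iUnion fun μ : (W → Fin k) → A =>
    Set.countable_singleton (slidingBlockCode W μ '' sftZ Ω P)).mono fun X hX => ?_
  obtain ⟨k, Ω, P, W, μ, rfl⟩ := IsSoficZ.exists_eq_image_slidingBlockCode hX
  simp only [Set.mem_iUnion, Set.mem_singleton_iff]
  exact ⟨k, Ω, P, W, μ, rfl⟩

end Sofic

theorem not_countable_setOf_eq_Xsig :
    ¬ {Y : Set (ℤ → Bool) | ∃ σ : ℕ → ℕ, (∀ n, σ n = 2 ∨ σ n = 4) ∧ Y = Xsig σ}.Countable := by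
  intro h
  let σ : (ℕ → Bool) → ℕ → ℕ := fun b n => if b n then 2 else 4
  have hσ : ∀ b n, σ b n = 2 ∨ σ b n = 4 := fun b n => by by_cases hb : b n <;> simp [σ, hb]
  have hinj : Function.Injective fun b => Xsig (σ b) := fun b b' hbb' => by
    have hpos : ∀ b n, 0 < σ b n := fun b n => by rcases hσ b n with h | h <;> omega
    have := congrFun (Xsig_injOn (hpos b) (hpos b') hbb')
    funext n
    specialize this n
    by_cases hb : b n <;> by_cases hb' : b' n <;> simp_all [σ]
  have hcount : Countable (ℕ → Bool) := by
    rw [← Set.countable_univ_iff]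
    refine Set.Countable.mono (fun b _ => ?_) (h.preimage hinj)
    exact ⟨σ b, hσ b, rfl⟩
  have hcard := Cardinal.mk_le_aleph0_iff.2 hcount
  rw [← Cardinal.power_def, Cardinal.mk_bool, Cardinal.mk_nat] at hcard
  exact (Cardinal.cantor _).not_ge hcard

/-- There are uncountably many W-subshifts of `{0,1}^ℤ` which are neither sofic nor
strongly irreducible. Concretely: `σ ↦ X_σ` is injective on `{2,4}^ℕ`; each `X_σ` is a
subshift satisfying the W-condition with `n₀ = 3`, and is neither topologically mixing
nor strongly irreducible; only countably many of the `X_σ` are sofic; and hence there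
is an uncountable family of such subshifts `X_σ`, all W-subshifts, none sofic and none
strongly irreducible. -/
theorem uncountably_many_W_not_sofic_not_strongly_irreducible :
    (∀ σ σ' : ℕ → ℕ, (∀ n, σ n = 2 ∨ σ n = 4) → (∀ n, σ' n = 2 ∨ σ' n = 4) →
      Xsig σ = Xsig σ' → σ = σ') ∧
    (∀ σ : ℕ → ℕ, (∀ n, σ n = 2 ∨ σ n = 4) →
      IsSubshiftZ (Xsig σ) ∧
      (∀ u ∈ lang (Xsig σ), ∀ v ∈ lang (Xsig σ),
        ∃ c ∈ lang (Xsig σ), c.length ≤ 3 ∧ u ++ c ++ v ∈ lang (Xsig σ)) ∧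
      ¬ TopologicallyMixingZ (Xsig σ) ∧ ¬ IsStronglyIrreducibleZ (Xsig σ)) ∧
    {Y : Set (ℤ → Bool) |
      (∃ σ : ℕ → ℕ, (∀ n, σ n = 2 ∨ σ n = 4) ∧ Y = Xsig σ) ∧ IsSoficZ Y}.Countable ∧
    ∃ S : Set (Set (ℤ → Bool)), ¬ S.Countable ∧
      ∀ Y ∈ S, (∃ σ : ℕ → ℕ, (∀ n, σ n = 2 ∨ σ n = 4) ∧ Y = Xsig σ) ∧
        IsWSubshift Y ∧ ¬ IsSoficZ Y ∧ ¬ IsStronglyIrreducibleZ Y := by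
  have hpos (σ : ℕ → ℕ) (hσ : ∀ n, σ n = 2 ∨ σ n = 4) n : 0 < σ n := by
    rcases hσ n with h | h <;> omega
  have hle (σ : ℕ → ℕ) (hσ : ∀ n, σ n = 2 ∨ σ n = 4) n : σ n ≤ 4 := by
    rcases hσ n with h | h <;> omega
  have heven (σ : ℕ → ℕ) (hσ : ∀ n, σ n = 2 ∨ σ n = 4) n : Even (σ n) := by
    rcases hσ n with h | h <;> rw [h] <;> decide
  have hW (σ : ℕ → ℕ) (hσ : ∀ n, σ n = 2 ∨ σ n = 4) :=
    exists_append_mem_lang_Xsig (hpos σ hσ) (hle σ hσ)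
  have hnotSI (σ : ℕ → ℕ) (hσ : ∀ n, σ n = 2 ∨ σ n = 4) : ¬ IsStronglyIrreducibleZ (Xsig σ) :=
    fun hSI => not_topologicallyMixingZ_Xsig (heven σ hσ) hSI.topologicallyMixingZ
  have hsofic : {Y : Set (ℤ → Bool) |
      (∃ σ : ℕ → ℕ, (∀ n, σ n = 2 ∨ σ n = 4) ∧ Y = Xsig σ) ∧ IsSoficZ Y}.Countable :=
    countable_setOf_isSoficZ.mono fun _ hY => hY.2
  refine ⟨fun σ σ' hσ hσ' => Xsig_injOn (hpos σ hσ) (hpos σ' hσ'), fun σ hσ =>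
    ⟨isSubshiftZ_Xsig σ, hW σ hσ, not_topologicallyMixingZ_Xsig (heven σ hσ), hnotSI σ hσ⟩,
    hsofic, {Y | (∃ σ : ℕ → ℕ, (∀ n, σ n = 2 ∨ σ n = 4) ∧ Y = Xsig σ) ∧ ¬ IsSoficZ Y},
    fun hS => not_countable_setOf_eq_Xsig ((hS.union hsofic).mono fun Y hY => ?_), ?_⟩
  · by_cases hY' : IsSoficZ Y
    exacts [Or.inr ⟨hY, hY'⟩, Or.inl ⟨hY, hY'⟩]
  · rintro Y ⟨⟨σ, hσ, rfl⟩, hns⟩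
    exact ⟨⟨σ, hσ, rfl⟩, ⟨3, hW σ hσ⟩, hns, hnotSI σ hσ⟩
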